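/- Let X ⊆ ℝ be a measurable set such that to each x ∈ X there is associated a sequence D_n(x) of nested intervals converging to x (x ∈ D_{n+1}(x) ⊆ D_n(x) and |D_n(x)| → 0), with the property that for all x₁, x₂ ∈ X and all n, the intervals D_n(x₁) and D_n(x₂) are either equal or disjoint. Let Q_{n,m} (m ≥ n) be measurable subsets of ℝ, let Y_n be the set of x belonging to at most finitely many Q_{n,m}, and set q_{n,m}(x) = |Q_{n,m} ∩ D_m(x)|/|D_m(x)|. Suppose n₀ : X → ℕ ∪ {∞} is such that Σ_{m ≥ n} q_{n,m}(x) < ∞ for every n ≥ n₀(x). Then for almost every x ∈ X, x ∈ Y_n for every n ≥ n₀(x). -/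

import Mathlib

open Set Filter MeasureTheory Topology
open scoped ENNReal

/-!
Fix `n`. The points `x ∈ X` with `n₀ x ≤ n` are covered by countably many sets `Z` on which the
level-`0` cell `D 0 x` stays in a fixed ball `B` and `∑ₘ q_{n,m}(x) ≤ c`. On such a `Z`,
`|Z ∩ Q_{n,m}| ≤ ∫ gₘ`, where `gₘ` equals `q_{n,m}` on the level-`m` cell of each point of `Z`.
Cells are nested, and two cells of the same level are equal or disjoint, so at every `y` the values
`gₘ(y)`, `m ≤ M`, are the `q_{n,m}(x)` of a single `x ∈ Z`. Hence `∑ₘ gₘ ≤ c · 1_B`, so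
`∑ₘ |Z ∩ Q_{n,m}| ≤ c |B| < ∞`, and Borel–Cantelli concludes.
-/

lemma pairwiseDisjoint_image_of_eq_or_disjoint {α β : Type*} {F : β → Set α} {Z : Set β}
    (h : ∀ x ∈ Z, ∀ y ∈ Z, F x = F y ∨ Disjoint (F x) (F y)) : (F '' Z).PairwiseDisjoint id := by
  rintro _ ⟨x, hx, rfl⟩ _ ⟨y, hy, rfl⟩ hne
  exact (h x hx y hy).resolve_left hne

variable {α : Type*} [MeasurableSpace α] {μ : Measure α}

/-- For `P = D m '' Z` and `E = Q_{n,m}`, this equals `q_{n,m}(x)` on the cell `D m x`. -/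
noncomputable def partitionDensity (μ : Measure α) (P : Set (Set α)) (E : Set α) (y : α) : ℝ≥0∞ :=
  ∑' I : P, (I : Set α).indicator (fun _ => μ (E ∩ I) / μ I) y

section partitionDensity

variable {P : Set (Set α)} {E I : Set α} {y : α}

lemma measurable_partitionDensity (hP : P.Countable) (hmeas : ∀ I ∈ P, MeasurableSet I)
    (E : Set α) : Measurable (partitionDensity μ P E) :=
  have := hP.to_subtype
  Measurable.tsum fun I => measurable_const.indicator (hmeas I I.2)

lemma measure_inter_sUnion_le_lintegral_partitionDensity (hP : P.Countable)
    (hmeas : ∀ I ∈ P, MeasurableSet I) (hpos : ∀ I ∈ P, μ I ≠ 0) (hfin : ∀ I ∈ P, μ I ≠ ⊤)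
    (E : Set α) : μ (E ∩ ⋃₀ P) ≤ ∫⁻ y, partitionDensity μ P E y ∂μ := by
  have := hP.to_subtype
  calc μ (E ∩ ⋃₀ P) = μ (⋃ I ∈ P, E ∩ I) := by rw [sUnion_eq_biUnion, inter_iUnion₂]
    _ ≤ ∑' I : P, μ (E ∩ I) := measure_biUnion_le μ hP _
    _ = ∑' I : P, ∫⁻ y, (I : Set α).indicator (fun _ => μ (E ∩ I) / μ I) y ∂μ := by
      refine tsum_congr fun I => ?_
      rw [lintegral_indicator_const (hmeas I I.2), ENNReal.div_mul_cancel (hpos I I.2) (hfin I I.2)]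
    _ = ∫⁻ y, partitionDensity μ P E y ∂μ :=
      (lintegral_tsum fun I : P => (measurable_const.indicator (hmeas I I.2)).aemeasurable).symm

lemma partitionDensity_eq_of_mem (hP : P.PairwiseDisjoint id) (hI : I ∈ P) (hy : y ∈ I) :
    partitionDensity μ P E y = μ (E ∩ I) / μ I := by
  have hunique (J : P) (hJ : J ≠ ⟨I, hI⟩) : y ∉ (J : Set α) := fun hyJ =>
    hJ (Subtype.ext (hP.elim J.2 hI (not_disjoint_iff.2 ⟨y, hyJ, hy⟩)))
  rw [partitionDensity, tsum_eq_single ⟨I, hI⟩ fun J hJ => indicator_of_notMem (hunique J hJ) _]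
  exact indicator_of_mem hy _

lemma partitionDensity_eq_zero (hy : y ∉ ⋃₀ P) : partitionDensity μ P E y = 0 :=
  ENNReal.tsum_eq_zero.2 fun I => indicator_of_notMem (fun hyI => hy ⟨I, I.2, hyI⟩) _

end partitionDensity

lemma sum_range_partitionDensity_le {D : ℕ → α → Set α} {Z : Set α} {E : ℕ → Set α} {c : ℝ≥0∞}
    (hnest : ∀ x ∈ Z, Antitone fun m => D m x) (hdisj : ∀ m, (D m '' Z).PairwiseDisjoint id)
    (hc : ∀ x ∈ Z, ∑' m, μ (E m ∩ D m x) / μ (D m x) ≤ c) (y : α) (M : ℕ) :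
    ∑ m ∈ Finset.range M, partitionDensity μ (D m '' Z) (E m) y ≤ c := by
  induction M with
  | zero => simp
  | succ M ih =>
    by_cases hy : y ∈ ⋃₀ (D M '' Z)
    · obtain ⟨_, ⟨x, hx, rfl⟩, hyx⟩ := hy
      calc ∑ m ∈ Finset.range (M + 1), partitionDensity μ (D m '' Z) (E m) y
          = ∑ m ∈ Finset.range (M + 1), μ (E m ∩ D m x) / μ (D m x) :=
            Finset.sum_congr rfl fun m hm => partitionDensity_eq_of_mem (hdisj m)
              (mem_image_of_mem _ hx) (hnest x hx (Finset.mem_range_succ_iff.1 hm) hyx)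
        _ ≤ ∑' m, μ (E m ∩ D m x) / μ (D m x) := ENNReal.sum_le_tsum _
        _ ≤ c := hc x hx
    · rw [Finset.sum_range_succ, partitionDensity_eq_zero hy, add_zero]
      exact ih

structure IsNestedPartition (μ : Measure α) (D : ℕ → α → Set α) (Z : Set α) : Prop where
  mem_self : ∀ x ∈ Z, ∀ m, x ∈ D m x
  antitone : ∀ x ∈ Z, Antitone fun m => D m x
  pairwiseDisjoint : ∀ m, (D m '' Z).PairwiseDisjoint id
  countable : ∀ m, (D m '' Z).Countable
  measurableSet : ∀ x ∈ Z, ∀ m, MeasurableSet (D m x)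
  measure_ne_zero : ∀ x ∈ Z, ∀ m, μ (D m x) ≠ 0
  measure_ne_top : ∀ x ∈ Z, ∀ m, μ (D m x) ≠ ⊤

namespace IsNestedPartition

variable {D : ℕ → α → Set α} {Z X B : Set α} {E : ℕ → Set α} {c : ℝ≥0∞}

lemma mono (hX : IsNestedPartition μ D X) (hZ : Z ⊆ X) : IsNestedPartition μ D Z where
  mem_self x hx := hX.mem_self x (hZ hx)
  antitone x hx := hX.antitone x (hZ hx)
  pairwiseDisjoint m := (hX.pairwiseDisjoint m).subset (image_mono hZ)
  countable m := (hX.countable m).mono (image_mono hZ)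
  measurableSet x hx := hX.measurableSet x (hZ hx)
  measure_ne_zero x hx := hX.measure_ne_zero x (hZ hx)
  measure_ne_top x hx := hX.measure_ne_top x (hZ hx)

lemma tsum_measure_inter_le (hD : IsNestedPartition μ D Z) (hB : ∀ x ∈ Z, D 0 x ⊆ B)
    (hc : ∀ x ∈ Z, ∑' m, μ (E m ∩ D m x) / μ (D m x) ≤ c) :
    ∑' m, μ (Z ∩ E m) ≤ c * μ B := by
  have hmeas m : ∀ I ∈ D m '' Z, MeasurableSet I :=
    forall_mem_image.2 fun x hx => hD.measurableSet x hx m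
  calc ∑' m, μ (Z ∩ E m) ≤ ∑' m, ∫⁻ y, partitionDensity μ (D m '' Z) (E m) y ∂μ := by
        refine ENNReal.tsum_le_tsum fun m => (measure_mono ?_).trans
          (measure_inter_sUnion_le_lintegral_partitionDensity (hD.countable m) (hmeas m)
            (forall_mem_image.2 fun x hx => hD.measure_ne_zero x hx m)
            (forall_mem_image.2 fun x hx => hD.measure_ne_top x hx m) _)
        exact fun y hy => ⟨hy.2, D m y, mem_image_of_mem _ hy.1, hD.mem_self y hy.1 m⟩
    _ = ∫⁻ y, ∑' m, partitionDensity μ (D m '' Z) (E m) y ∂μ :=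
        (lintegral_tsum fun m =>
          (measurable_partitionDensity (hD.countable m) (hmeas m) _).aemeasurable).symm
    _ ≤ ∫⁻ y, B.indicator (fun _ => c) y ∂μ := by
        refine lintegral_mono fun y => ?_
        by_cases hy : y ∈ B
        · rw [indicator_of_mem hy]
          exact ENNReal.tsum_le_of_sum_range_le
            (sum_range_partitionDensity_le hD.antitone hD.pairwiseDisjoint hc y)
        · refine (ENNReal.tsum_eq_zero.2 fun m => partitionDensity_eq_zero ?_).trans_le zero_le
          rintro ⟨_, ⟨x, hx, rfl⟩, hyx⟩
          exact hy (hB x hx (hD.antitone x hx (Nat.zero_le m) hyx))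
    _ ≤ c * μ B := lintegral_indicator_const_le B c

lemma ae_finite_setOf_mem (hD : IsNestedPartition μ D Z) (hB : ∀ x ∈ Z, D 0 x ⊆ B)
    (hBfin : μ B ≠ ⊤) (hc : ∀ x ∈ Z, ∑' m, μ (E m ∩ D m x) / μ (D m x) ≤ c) (hcfin : c ≠ ⊤) :
    ∀ᵐ x ∂μ, x ∈ Z → {m | x ∈ E m}.Finite := by
  have hsum : ∑' m, μ (Z ∩ E m) ≠ ⊤ :=
    ne_top_of_le_ne_top (ENNReal.mul_ne_top hcfin hBfin) (hD.tsum_measure_inter_le hB hc)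
  filter_upwards [ae_eventually_notMem hsum] with x hx hxZ
  rw [← Nat.cofinite_eq_atTop, eventually_cofinite] at hx
  exact hx.subset fun m hm hxm => hxm ⟨hxZ, hm⟩

end IsNestedPartition

lemma measurableSet_of_Ioo_subset_of_subset_Icc {I : Set ℝ} {u w : ℝ} (h₁ : Ioo u w ⊆ I)
    (h₂ : I ⊆ Icc u w) : MeasurableSet I := by
  have hends : I \ Ioo u w ⊆ {u, w} := fun z ⟨hzI, hz⟩ => by
    obtain ⟨hu, hw⟩ := h₂ hzI
    simp only [mem_Ioo, not_and_or, not_lt] at hz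
    rcases hz with hz | hz
    · exact Or.inl (le_antisymm hz hu)
    · exact Or.inr (le_antisymm hw hz)
  rw [← union_sdiff_cancel h₁]
  exact measurableSet_Ioo.union ((toFinite _).subset hends).measurableSet

lemma isNestedPartition_of_intervals {μ : Measure ℝ} [μ.IsOpenPosMeasure]
    [IsFiniteMeasureOnCompacts μ] {X : Set ℝ} {D : ℕ → ℝ → Set ℝ}
    (hint : ∀ x ∈ X, ∀ n, ∃ u w : ℝ, u < w ∧ Ioo u w ⊆ D n x ∧ D n x ⊆ Icc u w)
    (hmem : ∀ x ∈ X, ∀ n, x ∈ D n x) (hnest : ∀ x ∈ X, ∀ n, D (n + 1) x ⊆ D n x)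
    (hdisj : ∀ x₁ ∈ X, ∀ x₂ ∈ X, ∀ n, D n x₁ = D n x₂ ∨ Disjoint (D n x₁) (D n x₂)) :
    IsNestedPartition μ D X where
  mem_self := hmem
  antitone x hx := antitone_nat_of_succ_le (hnest x hx)
  pairwiseDisjoint n := pairwiseDisjoint_image_of_eq_or_disjoint fun x hx y hy => hdisj x hx y hy n
  countable n := by
    refine (pairwiseDisjoint_image_of_eq_or_disjoint fun x hx y hy => hdisj x hx y hy n)
      |>.countable_of_nonempty_interior ?_
    rintro _ ⟨x, hx, rfl⟩
    obtain ⟨u, w, huw, h₁, -⟩ := hint x hx n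
    exact (nonempty_Ioo.2 huw).mono (interior_maximal h₁ isOpen_Ioo)
  measurableSet x hx n := by
    obtain ⟨u, w, -, h₁, h₂⟩ := hint x hx n
    exact measurableSet_of_Ioo_subset_of_subset_Icc h₁ h₂
  measure_ne_zero x hx n := by
    obtain ⟨u, w, huw, h₁, -⟩ := hint x hx n
    exact ((Measure.measure_Ioo_pos μ).2 huw |>.trans_le (measure_mono h₁)).ne'
  measure_ne_top x hx n := by
    obtain ⟨u, w, -, -, h₂⟩ := hint x hx n
    exact ((measure_mono h₂).trans_lt measure_Icc_lt_top).ne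

lemma ofReal_toReal_div_toReal {a b : ℝ≥0∞} (hab : a ≤ b) (hb : b ≠ ⊤) :
    ENNReal.ofReal (a.toReal / b.toReal) = a / b := by
  rcases eq_or_ne b 0 with rfl | hb₀
  · simp [nonpos_iff_eq_zero.1 hab]
  rw [← ENNReal.toReal_div,
    ENNReal.ofReal_toReal (ENNReal.div_ne_top (ne_top_of_le_ne_top hb hab) hb₀)]

lemma tsum_measure_inter_div_ne_top_of_summable {D Q : ℕ → Set α} {n : ℕ} (hfin : ∀ m, μ (D m) ≠ ⊤)
    (hsum : Summable fun m => if n ≤ m then (μ (Q m ∩ D m)).toReal / (μ (D m)).toReal else 0) :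
    ∑' m, μ ({y | n ≤ m ∧ y ∈ Q m} ∩ D m) / μ (D m) ≠ ⊤ := by
  have hterm m : μ ({y | n ≤ m ∧ y ∈ Q m} ∩ D m) / μ (D m) = ENNReal.ofReal
      (if n ≤ m then (μ (Q m ∩ D m)).toReal / (μ (D m)).toReal else 0) := by
    split_ifs with h
    · simp only [h, true_and, ofPred_mem_eq]
      exact (ofReal_toReal_div_toReal (measure_mono inter_subset_right) (hfin m)).symm
    · simp [h]
  have hnonneg m : 0 ≤ if n ≤ m then (μ (Q m ∩ D m)).toReal / (μ (D m)).toReal else 0 := by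
    split_ifs <;> positivity
  rw [tsum_congr hterm, ← ENNReal.ofReal_tsum_of_nonneg hnonneg hsum]
  exact ENNReal.ofReal_ne_top

theorem measure_theoretical_lemma_doubly_indexed_general (X : Set ℝ) (hX : MeasurableSet X)
    (D : ℕ → ℝ → Set ℝ)
    (hDint : ∀ x ∈ X, ∀ n, ∃ u w : ℝ, u < w ∧ Ioo u w ⊆ D n x ∧ D n x ⊆ Icc u w)
    (hDmem : ∀ x ∈ X, ∀ n, x ∈ D n x)
    (hDnest : ∀ x ∈ X, ∀ n, D (n + 1) x ⊆ D n x)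
    (hDdisj : ∀ x₁ ∈ X, ∀ x₂ ∈ X, ∀ n, D n x₁ = D n x₂ ∨ Disjoint (D n x₁) (D n x₂))
    (Q : ℕ → ℕ → Set ℝ)
    (n₀ : ℝ → ℕ∞)
    (hsum : ∀ x ∈ X, ∀ n : ℕ, n₀ x ≤ (n : ℕ∞) →
      Summable (fun m : ℕ =>
        if n ≤ m then (volume (Q n m ∩ D m x)).toReal / (volume (D m x)).toReal else 0)) :
    ∀ᵐ x ∂(volume.restrict X), ∀ n : ℕ, n₀ x ≤ (n : ℕ∞) →
      {m : ℕ | n ≤ m ∧ x ∈ Q n m}.Finite := by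
  have hD : IsNestedPartition volume D X :=
    isNestedPartition_of_intervals hDint hDmem hDnest hDdisj
  let E (n m : ℕ) : Set ℝ := {y | n ≤ m ∧ y ∈ Q n m}
  let Z (n r c : ℕ) : Set ℝ := {x ∈ X | D 0 x ⊆ Metric.closedBall 0 r ∧
    ∑' m, volume (E n m ∩ D m x) / volume (D m x) ≤ c}
  have hZ (n r c : ℕ) : ∀ᵐ x, x ∈ Z n r c → {m | x ∈ E n m}.Finite :=
    (hD.mono fun x hx => hx.1).ae_finite_setOf_mem (fun x hx => hx.2.1)
      measure_closedBall_lt_top.ne (fun x hx => hx.2.2) (ENNReal.natCast_ne_top c)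
  have hcover (x : ℝ) (hx : x ∈ X) (n : ℕ) (hn : n₀ x ≤ n) : ∃ r c : ℕ, x ∈ Z n r c := by
    obtain ⟨u, w, -, -, hDuw⟩ := hDint x hx 0
    obtain ⟨R, hR⟩ := (Metric.isBounded_Icc u w |>.subset hDuw).subset_closedBall 0
    obtain ⟨c, hc⟩ := ENNReal.exists_nat_gt <| tsum_measure_inter_div_ne_top_of_summable
      (hD.measure_ne_top x hx) (hsum x hx n hn)
    exact ⟨⌈R⌉₊, c, hx, hR.trans (Metric.closedBall_subset_closedBall (Nat.le_ceil R)), hc.le⟩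
  rw [ae_restrict_iff' hX]
  filter_upwards [ae_all_iff.2 fun n => ae_all_iff.2 fun r => ae_all_iff.2 (hZ n r)]
    with x hx hxX n hn
  obtain ⟨r, c, hxZ⟩ := hcover x hxX n hn
  exact hx n r c hxZ

/-- Variant of the measure-theoretical lemma with doubly-indexed bad sets `Q_{n,m}`:
if `Σ_{m ≥ n} q_{n,m}(x) < ∞` for all `n ≥ n₀(x)`, then for almost every `x ∈ X`,
`x` belongs to at most finitely many `Q_{n,m}` for each `n ≥ n₀(x)`. -/
theorem measure_theoretical_lemma_doubly_indexed (X : Set ℝ) (hX : MeasurableSet X)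
    (D : ℕ → ℝ → Set ℝ)
    (hDint : ∀ x ∈ X, ∀ n, ∃ u w : ℝ, u < w ∧ Ioo u w ⊆ D n x ∧ D n x ⊆ Icc u w)
    (hDmem : ∀ x ∈ X, ∀ n, x ∈ D n x)
    (hDnest : ∀ x ∈ X, ∀ n, D (n + 1) x ⊆ D n x)
    (hDconv : ∀ x ∈ X, Tendsto (fun n => volume (D n x)) atTop (𝓝 0))
    (hDdisj : ∀ x₁ ∈ X, ∀ x₂ ∈ X, ∀ n, D n x₁ = D n x₂ ∨ Disjoint (D n x₁) (D n x₂))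
    (Q : ℕ → ℕ → Set ℝ) (hQ : ∀ n m, MeasurableSet (Q n m))
    (n₀ : ℝ → ℕ∞)
    (hsum : ∀ x ∈ X, ∀ n : ℕ, n₀ x ≤ (n : ℕ∞) →
      Summable (fun m : ℕ =>
        if n ≤ m then (volume (Q n m ∩ D m x)).toReal / (volume (D m x)).toReal else 0)) :
    ∀ᵐ x ∂(volume.restrict X), ∀ n : ℕ, n₀ x ≤ (n : ℕ∞) →
      {m : ℕ | n ≤ m ∧ x ∈ Q n m}.Finite :=
  measure_theoretical_lemma_doubly_indexed_general X hX D hDint hDmem hDnest hDdisj Q n₀ hsum
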